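/- arXiv:1706.05135 — 5 statements merged into one kernel-verified Lean document; each statement's English description precedes it below -/
import Mathlib

section
/- Let C ⊆ ℝ^d be a convex set, h : C → ℝ a nonpositive convex function, and x¹,...,x^k ∈ C such that h(x¹) = 0 and x¹ lies in the relative interior of (affine span of {x¹,...,x^k}) ∩ C. Then h(x) = 0 for every x in (affine span of {x¹,...,x^k}) ∩ C. -/
theorem stmt_0 {d k : ℕ} (C : Set (Fin d → ℝ)) (hC : Convex ℝ C)
    (h : (Fin d → ℝ) → ℝ) (hconv : ConvexOn ℝ C h)
    (hnonpos : ∀ x ∈ C, h x ≤ 0)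
    (x : Fin k → (Fin d → ℝ)) (hxC : ∀ i, x i ∈ C) (hk : 0 < k)
    (h0 : h (x ⟨0, hk⟩) = 0)
    (hri : x ⟨0, hk⟩ ∈ intrinsicInterior ℝ
      ((affineSpan ℝ (Set.range x) : Set (Fin d → ℝ)) ∩ C)) :
    ∀ y ∈ (affineSpan ℝ (Set.range x) : Set (Fin d → ℝ)) ∩ C, h y = 0 := by
  set x0 := x ⟨0, hk⟩ with hx0
  set S : Set (Fin d → ℝ) := (affineSpan ℝ (Set.range x) : Set (Fin d → ℝ)) ∩ C with hS
  -- affine span of S equals affine span of range x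
  have hspan : affineSpan ℝ S = affineSpan ℝ (Set.range x) := by
    apply le_antisymm
    · rw [affineSpan_le]
      exact fun p hp => hp.1
    · apply affineSpan_mono
      rintro p ⟨i, rfl⟩
      exact ⟨subset_affineSpan ℝ _ ⟨i, rfl⟩, hxC i⟩
  rintro y ⟨hy1, hy2⟩
  have hyS : y ∈ S := ⟨hy1, hy2⟩
  have hx0S : x0 ∈ S := intrinsicInterior_subset hri
  rw [mem_intrinsicInterior] at hri
  obtain ⟨p, hp, hpx⟩ := hri
  have hymem : y ∈ affineSpan ℝ S := by rw [hspan]; exact hy1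
  have hx0mem : x0 ∈ affineSpan ℝ S := by rw [hspan]; exact hx0S.1
  -- the line through y and x0, inside the affine span
  have hline : ∀ t : ℝ, AffineMap.lineMap y x0 t ∈ affineSpan ℝ S := fun t =>
    AffineMap.lineMap_mem t hymem hx0mem
  set f : ℝ → (affineSpan ℝ S : Set (Fin d → ℝ)) :=
    fun t => ⟨AffineMap.lineMap y x0 t, hline t⟩ with hf
  have hfc : Continuous f := by
    apply Continuous.subtype_mk
    exact AffineMap.lineMap_continuous
  have hf1 : f 1 ∈ interior (((↑) : affineSpan ℝ S → (Fin d → ℝ)) ⁻¹' S) := by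
    have : f 1 = p := by
      apply Subtype.ext
      simp [hf, hpx]
    rw [this]; exact hp
  have hopen : IsOpen (f ⁻¹' interior (((↑) : affineSpan ℝ S → (Fin d → ℝ)) ⁻¹' S)) :=
    isOpen_interior.preimage hfc
  obtain ⟨ε, hε, hball⟩ := Metric.isOpen_iff.mp hopen 1 hf1
  set t : ℝ := 1 + ε / 2 with ht
  have ht1 : 1 < t := by simp [ht]; linarith
  have htmem : f t ∈ interior (((↑) : affineSpan ℝ S → (Fin d → ℝ)) ⁻¹' S) := by
    apply hball
    rw [Metric.mem_ball, Real.dist_eq]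
    simp [ht]
    rw [abs_of_nonneg (by linarith)]
    linarith
  have hzS : AffineMap.lineMap y x0 t ∈ S := by
    have h' := interior_subset htmem
    exact h'
  set z : Fin d → ℝ := AffineMap.lineMap y x0 t with hz
  -- x0 is a convex combination of y and z
  have ht0 : (0:ℝ) < t := by linarith
  have hcomb : (1 - t⁻¹) • y + t⁻¹ • z = x0 := by
    rw [hz, AffineMap.lineMap_apply_module]
    have htne : t ≠ 0 := ne_of_gt ht0
    funext i
    simp only [Pi.add_apply, Pi.smul_apply, smul_eq_mul, Pi.sub_apply]
    field_simp
    ring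
  have hinv : (0:ℝ) < t⁻¹ := inv_pos.mpr ht0
  have hinv1 : t⁻¹ < 1 := by
    rw [inv_lt_one_iff₀]; right; exact ht1
  have hle : h x0 ≤ (1 - t⁻¹) * h y + t⁻¹ * h z := by
    have := hconv.2 hy2 hzS.2 (by linarith : (0:ℝ) ≤ 1 - t⁻¹) (le_of_lt hinv) (by ring)
    rwa [hcomb] at this
  have hzle : h z ≤ 0 := hnonpos z hzS.2
  have hyle : h y ≤ 0 := hnonpos y hy2
  rw [h0] at hle
  nlinarith
end

section
/- Let S ⊆ ℝ^n and suppose there exists R ⊆ S with |R| = w such that for all distinct x, y ∈ R, (x+y)/2 ∉ S. If M ⊆ ℝ^{n+p+d} is a convex set with S = proj_x(M ∩ (ℝ^{n+p} × ℤ^d)), then d ≥ ⌈log₂(w)⌉. -/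
/-!
Suppose `2 ^ d < w`. Lift each point of `R` to a point of `M` whose last `d` coordinates are
integers. By pigeonhole two distinct points `x, y ∈ R` have lifts whose integer parts agree
mod 2, so the midpoint of the two lifts again has integral last coordinates; it lies in `M` by
convexity and projects to the midpoint of `x` and `y`, which therefore lies in `S`.
-/

open Set

/-- The paper's `proj_x (M ∩ (E × F × ℤ^ι))`. -/
def mixedIntegerProj {E F ι : Type*} (M : Set (E × F × (ι → ℝ))) : Set E :=
  {x | ∃ y z, (x, y, z) ∈ M ∧ ∀ i, ∃ m : ℤ, z i = (m : ℝ)}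

theorem exists_ne_even_add_of_two_pow_lt {α ι : Type*} [Finite ι] {s : Set α}
    (m : α → ι → ℤ) (hs : 2 ^ Nat.card ι < s.ncard) :
    ∃ a ∈ s, ∃ b ∈ s, a ≠ b ∧ ∀ i, Even (m a i + m b i) := by
  have hparities : (univ : Set (ι → Bool)).ncard = 2 ^ Nat.card ι := by
    simp [ncard_univ, Nat.card_fun]
  obtain ⟨a, ha, b, hb, hne, hpar⟩ := exists_ne_map_eq_of_ncard_lt_of_maps_to
    (hparities ▸ hs) (f := fun a i => decide (Even (m a i))) fun _ _ => mem_univ _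
  exact ⟨a, ha, b, hb, hne, fun i => Int.even_add.mpr (decide_eq_decide.mp (congrFun hpar i))⟩

theorem midpoint_apply_eq_intCast_of_even_add {ι : Type*} {m₁ m₂ : ι → ℤ} {z₁ z₂ : ι → ℝ}
    (hz₁ : ∀ i, z₁ i = m₁ i) (hz₂ : ∀ i, z₂ i = m₂ i) (heven : ∀ i, Even (m₁ i + m₂ i))
    (i : ι) : ∃ k : ℤ, midpoint ℝ z₁ z₂ i = k := by
  obtain ⟨k, hk⟩ := heven i
  refine ⟨k, ?_⟩
  rw [pi_midpoint_apply, midpoint_eq_smul_add, hz₁, hz₂, ← Int.cast_add, hk, Int.cast_add,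
    invOf_eq_inv, smul_eq_mul]
  ring

theorem midpoint_mem_mixedIntegerProj {E F ι : Type*} [AddCommGroup E] [Module ℝ E]
    [AddCommGroup F] [Module ℝ F] {M : Set (E × F × (ι → ℝ))} (hM : Convex ℝ M)
    {x₁ x₂ : E} {y₁ y₂ : F} {z₁ z₂ : ι → ℝ} {m₁ m₂ : ι → ℤ}
    (h₁ : (x₁, y₁, z₁) ∈ M) (h₂ : (x₂, y₂, z₂) ∈ M)
    (hz₁ : ∀ i, z₁ i = m₁ i) (hz₂ : ∀ i, z₂ i = m₂ i) (heven : ∀ i, Even (m₁ i + m₂ i)) :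
    midpoint ℝ x₁ x₂ ∈ mixedIntegerProj M :=
  ⟨midpoint ℝ y₁ y₂, midpoint ℝ z₁ z₂, hM.midpoint_mem h₁ h₂,
    midpoint_apply_eq_intCast_of_even_add hz₁ hz₂ heven⟩

theorem Pi.midpoint_eq_add_div_two {ι : Type*} (x y : ι → ℝ) :
    midpoint ℝ x y = fun i => (x i + y i) / 2 := by
  ext i
  rw [pi_midpoint_apply, midpoint_eq_smul_add, invOf_eq_inv, smul_eq_mul]
  ring

theorem stmt_5_general (n p d w : ℕ)
    (S : Set (Fin n → ℝ)) (R : Set (Fin n → ℝ))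
    (hRS : R ⊆ S) (hRcard : R.ncard = w)
    (hmid : ∀ x ∈ R, ∀ y ∈ R, x ≠ y → (fun i => (x i + y i) / 2) ∉ S)
    (M : Set ((Fin n → ℝ) × (Fin p → ℝ) × (Fin d → ℝ)))
    (hM : Convex ℝ M)
    (hS : S = {x | ∃ y z, (x, y, z) ∈ M ∧ ∀ i, ∃ m : ℤ, z i = (m : ℝ)}) :
    Nat.clog 2 w ≤ d := by
  rw [Nat.clog_le_iff_le_pow one_lt_two]
  by_contra! hcard
  change S = mixedIntegerProj M at hS
  subst hS
  choose! Y Z hZM m hm using fun r (hr : r ∈ R) => hRS hr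
  obtain ⟨x, hx, y, hy, hne, heven⟩ :=
    exists_ne_even_add_of_two_pow_lt m (s := R) (by rwa [Nat.card_fin, hRcard])
  refine hmid x hx y hy hne ?_
  rw [← Pi.midpoint_eq_add_div_two]
  exact midpoint_mem_mixedIntegerProj hM (hZM x hx) (hZM y hy) (hm x hx) (hm y hy) heven

theorem stmt_5 (n p d w : ℕ)
    (S : Set (Fin n → ℝ)) (R : Set (Fin n → ℝ))
    (hRS : R ⊆ S) (hRfin : R.Finite) (hRcard : R.ncard = w)
    (hmid : ∀ x ∈ R, ∀ y ∈ R, x ≠ y → (fun i => (x i + y i) / 2) ∉ S)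
    (M : Set ((Fin n → ℝ) × (Fin p → ℝ) × (Fin d → ℝ)))
    (hM : Convex ℝ M)
    (hS : S = {x | ∃ y z, (x, y, z) ∈ M ∧ ∀ i, ∃ m : ℤ, z i = (m : ℝ)}) :
    Nat.clog 2 w ≤ d :=
  stmt_5_general n p d w S R hRS hRcard hmid M hM hS
end

section
/- Let S ⊆ {0,1}^n be the set of binary vectors with an even number of ones. Any MICP formulation of S, i.e., convex M ⊆ ℝ^{n+p+d} with S = proj_x(M ∩ (ℝ^{n+p} × ℤ^d)), requires d ≥ n - 1. -/
/-!
If two mixed-integer points `(x, y, w)` and `(x', y', w')` of the convex set `M` have integer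
parts congruent modulo 2, their midpoint again lies in `M` and has an integral last block, so
`midpoint x x'` lies in the projection. Midpoints of distinct `0/1` vectors are never `0/1`
vectors, so on the even-weight vectors the parity vector `w mod 2 ∈ (ZMod 2)^d` is injective,
whence `2^(n-1) ≤ 2^d`.
-/

theorem Int.exists_midpoint_eq_intCast_of_zmod_two_eq {a b : ℤ} (h : (a : ZMod 2) = b) :
    ∃ m : ℤ, midpoint ℝ (a : ℝ) b = m := by
  obtain ⟨k, hk⟩ := (ZMod.intCast_eq_intCast_iff_dvd_sub _ _ _).mp h
  refine ⟨a + k, ?_⟩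
  have hb : (b : ℝ) = a + 2 * k := by exact_mod_cast (by omega : b = a + 2 * k)
  rw [midpoint_eq_smul_add, invOf_eq_inv, hb]
  push_cast
  ring

section MixedInteger

variable {E F : Type*} {d : ℕ}

def mixedIntegerProjection (M : Set (E × F × (Fin d → ℝ))) : Set E :=
  {x | ∃ y z, (x, y, z) ∈ M ∧ ∀ i, ∃ m : ℤ, z i = m}

variable {M : Set (E × F × (Fin d → ℝ))}

theorem exists_intCast_of_mem_mixedIntegerProjection {x : E} (hx : x ∈ mixedIntegerProjection M) :
    ∃ (y : F) (w : Fin d → ℤ), (x, y, fun i => (w i : ℝ)) ∈ M := by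
  obtain ⟨y, z, hz, hint⟩ := hx
  choose w hw using hint
  exact ⟨y, w, by rwa [← funext hw]⟩

variable [AddCommGroup E] [Module ℝ E] [AddCommGroup F] [Module ℝ F]

theorem midpoint_mem_mixedIntegerProjection (hM : Convex ℝ M) {x x' : E} {y y' : F}
    {w w' : Fin d → ℤ} (h : (x, y, fun i => (w i : ℝ)) ∈ M)
    (h' : (x', y', fun i => (w' i : ℝ)) ∈ M)
    (hw : ∀ i, (w i : ZMod 2) = w' i) :
    midpoint ℝ x x' ∈ mixedIntegerProjection M :=
  ⟨_, _, hM.midpoint_mem h h', fun i => Int.exists_midpoint_eq_intCast_of_zmod_two_eq (hw i)⟩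

theorem card_le_two_pow_of_pairwise_midpoint_notMem (hM : Convex ℝ M) {ι : Type*} [Fintype ι]
    {f : ι → E} (hf : ∀ i, f i ∈ mixedIntegerProjection M)
    (hmid : Pairwise fun i j => midpoint ℝ (f i) (f j) ∉ mixedIntegerProjection M) :
    Fintype.card ι ≤ 2 ^ d := by
  choose y w hw using fun i => exists_intCast_of_mem_mixedIntegerProjection (hf i)
  have parity_injective : Function.Injective fun i j => (w i j : ZMod 2) := by
    intro i j hij
    by_contra hne
    exact hmid hne (midpoint_mem_mixedIntegerProjection hM (hw i) (hw j) (congrFun hij))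
  simpa using Fintype.card_le_of_injective _ parity_injective

end MixedInteger

theorem eq_of_midpoint_mem_zero_one {ι : Type*} {x x' : ι → ℝ}
    (hx : ∀ i, x i = 0 ∨ x i = 1) (hx' : ∀ i, x' i = 0 ∨ x' i = 1)
    (hmid : ∀ i, midpoint ℝ x x' i = 0 ∨ midpoint ℝ x x' i = 1) :
    x = x' := by
  funext i
  have := hmid i
  rw [pi_midpoint_apply, midpoint_eq_smul_add, smul_eq_mul] at this
  rcases hx i with h | h <;> rcases hx' i with h' | h' <;> rw [h, h'] at this ⊢ <;>
    norm_num at this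

section EvenCompletion

variable {m : ℕ}

def evenCompletion (v : Fin m → Bool) : Fin (m + 1) → Bool :=
  Fin.snoc v (∑ j, (v j).toNat).bodd

theorem evenCompletion_castSucc (v : Fin m → Bool) (i : Fin m) :
    evenCompletion v i.castSucc = v i :=
  Fin.snoc_castSucc ..

theorem even_sum_evenCompletion (v : Fin m → Bool) :
    Even (∑ i, (evenCompletion v i).toNat) := by
  have := Nat.bodd_add_div2 (∑ j, (v j).toNat)
  rw [Fin.sum_univ_castSucc]
  simp only [evenCompletion_castSucc]
  simp only [evenCompletion, Fin.snoc_last]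
  exact ⟨(∑ j, (v j).toNat).div2 + (∑ j, (v j).toNat).bodd.toNat, by omega⟩

theorem evenCompletion_injective : Function.Injective (evenCompletion (m := m)) := by
  intro v v' h
  funext i
  simpa only [evenCompletion_castSucc] using congrFun h i.castSucc

def evenVertex (v : Fin m → Bool) : Fin (m + 1) → ℝ :=
  fun i => (evenCompletion v i).toNat

theorem evenVertex_eq_zero_or_one (v : Fin m → Bool) (i : Fin (m + 1)) :
    evenVertex v i = 0 ∨ evenVertex v i = 1 := by
  cases evenCompletion v i <;> simp [evenVertex]

theorem exists_sum_evenVertex_eq (v : Fin m → Bool) :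
    ∃ k : ℕ, ∑ i, evenVertex v i = 2 * (k : ℝ) := by
  obtain ⟨k, hk⟩ := even_sum_evenCompletion v
  refine ⟨k, ?_⟩
  simp only [evenVertex]
  exact_mod_cast hk.trans (two_mul k).symm

theorem evenVertex_injective : Function.Injective (evenVertex (m := m)) := by
  have toReal_injective : Function.Injective fun b : Bool => (b.toNat : ℝ) := by
    intro a b
    cases a <;> cases b <;> simp
  exact toReal_injective.comp_left.comp evenCompletion_injective

end EvenCompletion

theorem stmt_6 (n p d : ℕ)
    (S : Set (Fin n → ℝ))
    (hS : S = {x | (∀ i, x i = 0 ∨ x i = 1) ∧ ∃ k : ℕ, ∑ i, x i = 2 * (k : ℝ)})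
    (M : Set ((Fin n → ℝ) × (Fin p → ℝ) × (Fin d → ℝ)))
    (hM : Convex ℝ M)
    (hSM : S = {x | ∃ y z, (x, y, z) ∈ M ∧ ∀ i, ∃ m : ℤ, z i = (m : ℝ)}) :
    n - 1 ≤ d := by
  change S = mixedIntegerProjection M at hSM
  obtain _ | m := n
  · exact Nat.zero_le d
  have hf_mem : ∀ v, evenVertex v ∈ S := fun v => by
    rw [hS]
    exact ⟨evenVertex_eq_zero_or_one v, exists_sum_evenVertex_eq v⟩
  have hmid : Pairwise fun v v' => midpoint ℝ (evenVertex v) (evenVertex v') ∉ S := by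
    intro v v' hne hmem
    rw [hS] at hmem
    exact hne (evenVertex_injective (eq_of_midpoint_mem_zero_one (evenVertex_eq_zero_or_one v)
      (evenVertex_eq_zero_or_one v') hmem.1))
  have hcard := card_le_two_pow_of_pairwise_midpoint_notMem hM (hSM ▸ hf_mem) (hSM ▸ hmid)
  simp only [Fintype.card_fun, Fintype.card_bool, Fintype.card_fin] at hcard
  exact (Nat.pow_le_pow_iff_right one_lt_two).mp hcard
end

section
/- The set of prime numbers, viewed as a subset of ℝ, is ∞-strongly nonconvex: there is an infinite set R of primes such that for all distinct p, q ∈ R, (p+q)/2 is not prime. -/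
noncomputable def sn7g : ℕ → {x : ℕ × ℕ // 0 < x.2}
  | 0 => ⟨(3, 4), by norm_num⟩
  | n + 1 =>
    let prev := sn7g n
    let p := (Nat.exists_prime_gt_modEq_one prev.val.1 prev.prop.ne').choose
    ⟨(p, prev.val.2 * (p + 1)), Nat.mul_pos prev.prop (Nat.succ_pos p)⟩

noncomputable def sn7f (n : ℕ) : ℕ := (sn7g n).val.1
noncomputable def sn7K (n : ℕ) : ℕ := (sn7g n).val.2

lemma sn7_spec (n : ℕ) :
    Nat.Prime (sn7f (n + 1)) ∧ sn7f n < sn7f (n + 1) ∧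
      sn7f (n + 1) ≡ 1 [MOD sn7K n] ∧ sn7K (n + 1) = sn7K n * (sn7f (n + 1) + 1) := by
  have h := (Nat.exists_prime_gt_modEq_one (sn7g n).val.1 (sn7g n).prop.ne').choose_spec
  exact ⟨h.1, h.2.1, h.2.2, rfl⟩

lemma sn7f_prime (n : ℕ) : Nat.Prime (sn7f n) := by
  cases n with
  | zero => norm_num [sn7f, sn7g]
  | succ m => exact (sn7_spec m).1

lemma sn7f_mono : StrictMono sn7f :=
  strictMono_nat_of_lt_succ fun n => (sn7_spec n).2.1

lemma sn7f_ge (n : ℕ) : 3 ≤ sn7f n := by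
  have h0 : sn7f 0 = 3 := by norm_num [sn7f, sn7g]
  calc 3 = sn7f 0 := h0.symm
  _ ≤ sn7f n := sn7f_mono.le_iff_le.mpr (Nat.zero_le n)

lemma sn7_two_dvd_K (n : ℕ) : 2 ∣ sn7K n := by
  induction n with
  | zero => norm_num [sn7K, sn7g]
  | succ m ih => rw [(sn7_spec m).2.2.2]; exact ih.mul_right _

lemma sn7f_odd (n : ℕ) : ¬ (2 ∣ sn7f n) := by
  cases n with
  | zero => norm_num [sn7f, sn7g]
  | succ m =>
    have h := ((sn7_spec m).2.2.1).of_dvd (sn7_two_dvd_K m)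
    intro hd
    have := h.symm.dvd
    omega

lemma sn7_dvd_K : ∀ n, ∀ i ≤ n, (sn7f i + 1) ∣ sn7K n := by
  intro n
  induction n with
  | zero =>
    intro i hi
    interval_cases i
    norm_num [sn7f, sn7K, sn7g]
  | succ m ih =>
    intro i hi
    rw [(sn7_spec m).2.2.2]
    rcases Nat.lt_succ_iff_lt_or_eq.mp (Nat.lt_succ_of_le hi) with h | h
    · exact (ih i (Nat.lt_succ_iff.mp h)).mul_right _
    · rw [h]; exact Dvd.intro_left _ rfl

lemma sn7_key {i j : ℕ} (hij : i < j) :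
    ∃ a b : ℕ, 2 ≤ a ∧ 2 ≤ b ∧ sn7f j + sn7f i = 2 * (a * b) := by
  obtain ⟨m, rfl⟩ : ∃ m, j = m + 1 := ⟨j - 1, by omega⟩
  set p := sn7f (m + 1)
  set q := sn7f i
  -- q + 1 divides K m
  have hdvdK : (q + 1) ∣ sn7K m := sn7_dvd_K m i (by omega)
  have hmod : p ≡ 1 [MOD q + 1] := ((sn7_spec m).2.2.1).of_dvd hdvdK
  have hq3 : 3 ≤ q := sn7f_ge i
  have hp : q < p := lt_of_le_of_lt (sn7f_mono.le_iff_le.mpr (by omega)) (sn7_spec m).2.1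
  have hdvd : (q + 1) ∣ p - 1 := (Nat.modEq_iff_dvd' (by omega)).mp hmod.symm
  obtain ⟨t, ht⟩ := hdvd
  have ht1 : 1 ≤ t := by
    rcases Nat.eq_zero_or_pos t with h | h
    · rw [h, mul_zero] at ht; omega
    · exact h
  -- q odd
  have hqodd : ¬ (2 ∣ q) := sn7f_odd i
  obtain ⟨a, ha⟩ : ∃ a, q + 1 = 2 * a := ⟨(q + 1) / 2, by omega⟩
  refine ⟨a, t + 1, by omega, by omega, ?_⟩
  have hsum : p + q = (q + 1) * (t + 1) := by
    rw [Nat.mul_succ, ← ht]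
    omega
  rw [hsum, ha]
  ring

theorem stmt_7 :
    ∃ R : Set ℕ, R.Infinite ∧ (∀ p ∈ R, Nat.Prime p) ∧
      ∀ p ∈ R, ∀ q ∈ R, p ≠ q →
        ((p : ℝ) + (q : ℝ)) / 2 ∉ ((fun m : ℕ => (m : ℝ)) '' {m | Nat.Prime m}) := by
  refine ⟨Set.range sn7f, Set.infinite_range_of_injective sn7f_mono.injective, ?_, ?_⟩
  · rintro p ⟨n, rfl⟩
    exact sn7f_prime n
  · rintro p ⟨i, rfl⟩ q ⟨j, rfl⟩ hpq ⟨m, hm, hme⟩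
    simp only at hme
    have hij : i ≠ j := fun h => hpq (by rw [h])
    -- get factorization of sum
    have hsum : ∃ a b : ℕ, 2 ≤ a ∧ 2 ≤ b ∧ sn7f i + sn7f j = 2 * (a * b) := by
      rcases hij.lt_or_gt with h | h
      · obtain ⟨a, b, ha, hb, he⟩ := sn7_key h
        exact ⟨a, b, ha, hb, by omega⟩
      · exact sn7_key h
    obtain ⟨a, b, ha, hb, he⟩ := hsum
    have hm2 : 2 * m = sn7f i + sn7f j := by
      have : (2 * m : ℝ) = (sn7f i : ℝ) + (sn7f j : ℝ) := by
        have := hme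
        linarith
      exact_mod_cast this
    have hmab : m = a * b := by omega
    rw [hmab] at hm
    rcases (Nat.prime_mul_iff.mp hm) with ⟨_, h1⟩ | ⟨_, h1⟩ <;> omega
end

section
/- Let M ⊆ ℝ^{n+p+d} be a convex set inducing an MICP formulation of a closed set S ⊆ ℝ^n, i.e., S = proj_x(M ∩ (ℝ^{n+p} × ℤ^d)). Let C = proj_z(M) and A_z = proj_x(M ∩ (ℝ^{n+p} × {z})). Then S = ⋃_{z ∈ C ∩ ℤ^d} cl(A_z). -/
theorem stmt_14 (n p d : ℕ)
    (M : Set ((Fin n → ℝ) × (Fin p → ℝ) × (Fin d → ℝ)))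
    (hM : Convex ℝ M)
    (S : Set (Fin n → ℝ)) (hSclosed : IsClosed S)
    (hS : S = {x | ∃ y z, (x, y, z) ∈ M ∧ ∀ i, ∃ m : ℤ, z i = (m : ℝ)})
    (C : Set (Fin d → ℝ)) (hC : C = {z | ∃ x y, (x, y, z) ∈ M})
    (A : (Fin d → ℝ) → Set (Fin n → ℝ))
    (hA : ∀ z, A z = {x | ∃ y, (x, y, z) ∈ M}) :
    S = ⋃ z ∈ {z ∈ C | ∀ i, ∃ m : ℤ, z i = (m : ℝ)}, closure (A z) := by
  ext x
  simp only [Set.mem_iUnion, Set.mem_setOf_eq, exists_prop]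
  constructor
  · intro hx
    rw [hS] at hx
    obtain ⟨y, z, hm, hz⟩ := hx
    refine ⟨z, ⟨?_, hz⟩, subset_closure ?_⟩
    · rw [hC]; exact ⟨x, y, hm⟩
    · rw [hA]; exact ⟨y, hm⟩
  · rintro ⟨z, ⟨hzC, hzint⟩, hxcl⟩
    have hsub : A z ⊆ S := by
      intro x' hx'
      rw [hA] at hx'
      obtain ⟨y, hy⟩ := hx'
      rw [hS]
      exact ⟨y, z, hy, hzint⟩
    exact hSclosed.closure_subset_iff.mpr hsub hxcl
end
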